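/- Let t ≥ 1 and let σ_t be the powered rotation map on V × ({0,…,d−1})^t (defined by successively applying σ along the label sequence and reversing the output labels), and let W_t = S_t C_t be the flip-flop walk operator built from σ_t on ℂ^(V × ({0,…,d−1})^t). Assume σ_t has no fixed points. If Φ is a unit vector with W_t Φ = e^{iφ} Φ for some real φ with 0 < φ < π, then there exists a real eigenvalue μ of the normalized adjacency matrix A of σ such that cos φ = μ^t. -/

import Mathlib

open scoped InnerProductSpace

/-- The powered rotation map `σ_t` on `V × ({0,…,d−1})^t`: successively apply `σ` along the
label sequence, and return the final vertex together with the reversed list of output labels. -/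
def rotPow {V : Type*} {d : ℕ} (σ : V × Fin d → V × Fin d) :
    (t : ℕ) → V × (Fin t → Fin d) → V × (Fin t → Fin d)
  | 0, x => x
  | t + 1, (u, g) =>
      let p := σ (u, g 0)
      let q := rotPow σ t (p.1, fun i => g i.succ)
      (q.1, Fin.snoc q.2 p.2)

/-- The normalized adjacency matrix of the rotation map `σ`. -/
noncomputable def adjMatrix {V : Type*} [Fintype V] [DecidableEq V] {d : ℕ}
    (σ : V × Fin d → V × Fin d) : Matrix V V ℝ :=
  Matrix.of fun u v => (Finset.univ.filter (fun g : Fin d => (σ (u, g)).1 = v)).card / d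

/-- The coin state `ψ_u = (1/√|L|) Σ_{g∈L} e_{(u,g)}` for a general label set `L`. -/
noncomputable def psiStateGen (V L : Type*) [Fintype V] [DecidableEq V] [Fintype L] (u : V) :
    EuclideanSpace ℂ (V × L) :=
  WithLp.toLp 2 (fun x : V × L => if x.1 = u then ((1 / Real.sqrt (Fintype.card L) : ℝ) : ℂ) else 0)

/-- The coin operator `C = 2 Σ_u |ψ_u⟩⟨ψ_u| − I` applied to a vector. -/
noncomputable def coinOpGen {V L : Type*} [Fintype V] [DecidableEq V] [Fintype L]
    (Φ : EuclideanSpace ℂ (V × L)) : EuclideanSpace ℂ (V × L) :=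
  (2 : ℂ) • (∑ u : V, ⟪psiStateGen V L u, Φ⟫_ℂ • psiStateGen V L u) - Φ

/-- The flip-flop walk operator `W = S C` for a rotation map `τ` on `V × L`. -/
noncomputable def walkOpGen {V L : Type*} [Fintype V] [DecidableEq V] [Fintype L]
    (τ : V × L → V × L) (Φ : EuclideanSpace ℂ (V × L)) : EuclideanSpace ℂ (V × L) :=
  WithLp.toLp 2 (fun x => coinOpGen Φ (τ x))

/-!
Write `s u = ∑ g, Φ (u, g)` and `D` for the number of labels. The coin acts as `Φ ↦ (2/D) s − Φ`,
so the eigen-equation `W Φ = e Φ` read at `x = (u, g)` and at `τ x` (`τ` is an involution) gives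
`(2/D) s u + (e² − 1) Φ x = (2e/D) s (τ x).1`; summing over `g` and using `1 + e² = 2e cos φ`
yields `A_τ s = cos φ • s`, where `A_τ = A ^ t` is the adjacency matrix of the powered rotation
map. Since `e² ≠ 1`, `s = 0` would force `Φ = 0`; hence the real or the imaginary part of `s` is an
eigenvector of `A ^ t` for `cos φ`, and pairing it with an orthonormal eigenbasis of the symmetric
matrix `A` produces an eigenvalue `μ` of `A` with `μ ^ t = cos φ`.
-/

section RotPow

variable {V : Type*} {d : ℕ} (σ : V × Fin d → V × Fin d)

theorem rotPow_succ_cons (t : ℕ) (u : V) (a : Fin d) (r : Fin t → Fin d) :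
    rotPow σ (t + 1) (u, Fin.cons a r) =
      ((rotPow σ t ((σ (u, a)).1, r)).1, Fin.snoc (rotPow σ t ((σ (u, a)).1, r)).2 (σ (u, a)).2) :=
  rfl

theorem rotPow_succ_snoc (t : ℕ) (u : V) (r : Fin t → Fin d) (a : Fin d) :
    rotPow σ (t + 1) (u, Fin.snoc r a) =
      ((σ ((rotPow σ t (u, r)).1, a)).1,
        Fin.cons (σ ((rotPow σ t (u, r)).1, a)).2 (rotPow σ t (u, r)).2) := by
  induction t generalizing u with
  | zero =>
    rw [show (Fin.snoc r a : Fin 1 → Fin d) = Fin.cons a Fin.elim0 from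
      funext (Fin.forall_fin_one.2 rfl), rotPow_succ_cons]
    refine Prod.ext rfl (funext (Fin.forall_fin_one.2 rfl))
  | succ t ih =>
    induction r using Fin.consCases with
    | cons b r =>
      rw [← Fin.cons_snoc_eq_snoc_cons, rotPow_succ_cons, ih, rotPow_succ_cons,
        Fin.cons_snoc_eq_snoc_cons]

theorem rotPow_involutive (hσ : Function.Involutive σ) (t : ℕ) :
    Function.Involutive (rotPow σ t) := by
  induction t with
  | zero => exact fun _ => rfl
  | succ t ih =>
    rintro ⟨u, g⟩
    induction g using Fin.consCases with
    | cons a r =>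
      rw [rotPow_succ_cons, ← Prod.mk.eta (p := rotPow σ t _), rotPow_succ_snoc, ih, hσ]

end RotPow

section Adjacency

open Matrix

variable {V : Type*} [Fintype V] [DecidableEq V] {d : ℕ} (σ : V × Fin d → V × Fin d)

theorem adjMatrix_mulVec_apply (f : V → ℝ) (u : V) :
    (adjMatrix σ *ᵥ f) u = (d : ℝ)⁻¹ * ∑ g, f (σ (u, g)).1 := by
  rw [← Finset.sum_fiberwise Finset.univ (fun g => (σ (u, g)).1), Finset.mul_sum]
  refine Finset.sum_congr rfl fun v _ => ?_
  rw [Finset.sum_congr rfl fun g hg => congrArg f (Finset.mem_filter.1 hg).2]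
  simp [adjMatrix, div_eq_inv_mul, mul_assoc]

theorem adjMatrix_pow_mulVec_apply (f : V → ℝ) (t : ℕ) (u : V) :
    (adjMatrix σ ^ t *ᵥ f) u = ((d : ℝ) ^ t)⁻¹ * ∑ g : Fin t → Fin d, f (rotPow σ t (u, g)).1 := by
  induction t generalizing u with
  | zero => simp [rotPow]
  | succ t ih =>
    rw [pow_succ', ← mulVec_mulVec, adjMatrix_mulVec_apply, ← (Fin.consEquiv _).sum_comp,
      Fintype.sum_prod_type]
    simp only [ih, ← Finset.mul_sum, pow_succ', mul_inv, mul_assoc]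
    rfl

theorem adjMatrix_isSymm (hσ : Function.Involutive σ) : (adjMatrix σ).IsSymm := by
  have back {a b : V} {g : Fin d} (h : (σ (a, g)).1 = b) : σ (b, (σ (a, g)).2) = (a, g) := by
    rw [← h]; exact hσ _
  refine IsSymm.ext fun u v => ?_
  simp only [adjMatrix, of_apply]
  congr 2
  refine Finset.card_bij' (fun g _ => (σ (v, g)).2) (fun g _ => (σ (u, g)).2) ?_ ?_ ?_ ?_ <;>
  · intro g hg
    simp only [Finset.mem_filter, Finset.mem_univ, true_and] at hg ⊢
    simp [back hg]

end Adjacency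

namespace Matrix

variable {n : Type*} [Fintype n]

theorem pow_mulVec_of_mulVec_eq_smul {R : Type*} [CommSemiring R] [DecidableEq n]
    {A : Matrix n n R} {v : n → R} {μ : R} (h : A *ᵥ v = μ • v) (t : ℕ) :
    A ^ t *ᵥ v = μ ^ t • v := by
  induction t with
  | zero => simp
  | succ t ih => rw [pow_succ', ← mulVec_mulVec, ih, mulVec_smul, h, smul_smul, pow_succ]

theorem IsSymm.exists_eigenvalue_pow_eq_of_pow_mulVec_eq_smul [DecidableEq n]
    {A : Matrix n n ℝ} (hA : A.IsSymm) {t : ℕ} {c : ℝ} {w : n → ℝ} (hw : w ≠ 0)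
    (h : A ^ t *ᵥ w = c • w) :
    ∃ (μ : ℝ) (v : n → ℝ), v ≠ 0 ∧ A *ᵥ v = μ • v ∧ c = μ ^ t := by
  have hA' : A.IsHermitian := isHermitian_iff_isSymm.mpr hA
  set b := hA'.eigenvectorBasis
  obtain ⟨i, hi⟩ : ∃ i, w ⬝ᵥ b i ≠ 0 := by
    by_contra! hzero
    refine hw (congrArg WithLp.ofLp (b.repr.map_eq_zero_iff.mp (PiLp.ext fun i => ?_)))
    simpa [b.repr_apply_apply, EuclideanSpace.inner_eq_star_dotProduct] using hzero i
  refine ⟨hA'.eigenvalues i, b i, fun h0 => b.orthonormal.ne_zero i (by ext; simp [h0]),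
    hA'.mulVec_eigenvectorBasis i, mul_right_cancel₀ hi ?_⟩
  calc c * (w ⬝ᵥ b i) = (A ^ t *ᵥ w) ⬝ᵥ b i := by rw [h, smul_dotProduct, smul_eq_mul]
    _ = w ⬝ᵥ (A ^ t *ᵥ b i) := by
      rw [dotProduct_comm, dotProduct_mulVec, ← mulVec_transpose, (hA.pow t).eq, dotProduct_comm]
    _ = hA'.eigenvalues i ^ t * (w ⬝ᵥ b i) := by
      rw [pow_mulVec_of_mulVec_eq_smul (hA'.mulVec_eigenvectorBasis i), dotProduct_smul,
        smul_eq_mul]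

end Matrix

section Walk

variable {V L : Type*} [Fintype V] [DecidableEq V] [Fintype L]

def labelSum (Φ : EuclideanSpace ℂ (V × L)) (u : V) : ℂ :=
  ∑ g, Φ (u, g)

theorem inner_psiStateGen (u : V) (Φ : EuclideanSpace ℂ (V × L)) :
    ⟪psiStateGen V L u, Φ⟫_ℂ = ((1 / √(Fintype.card L) : ℝ) : ℂ) * labelSum Φ u := by
  simp [PiLp.inner_apply, Fintype.sum_prod_type, psiStateGen, labelSum, Finset.mul_sum,
    apply_ite (starRingEnd ℂ), mul_comm]
  rw [Finset.sum_eq_single u (fun v _ hv => by simp [hv]) (by simp)]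
  simp

theorem coinOpGen_apply (Φ : EuclideanSpace ℂ (V × L)) (y : V × L) :
    coinOpGen Φ y = 2 / Fintype.card L * labelSum Φ y.1 - Φ y := by
  have hnorm : ((1 / √(Fintype.card L) : ℝ) : ℂ) * ((1 / √(Fintype.card L) : ℝ) : ℂ) =
      1 / Fintype.card L := by
    rw [← Complex.ofReal_mul, div_mul_div_comm, one_mul, Real.mul_self_sqrt (Nat.cast_nonneg _)]
    push_cast; rfl
  have hψ (u : V) :
      psiStateGen V L u y = if y.1 = u then ((1 / √(Fintype.card L) : ℝ) : ℂ) else 0 :=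
    rfl
  simp only [coinOpGen, WithLp.ofLp_sub, WithLp.ofLp_smul, WithLp.ofLp_sum, Pi.sub_apply,
    Pi.smul_apply, Finset.sum_apply, smul_eq_mul, inner_psiStateGen, hψ, mul_ite, mul_zero,
    Finset.sum_ite_eq, Finset.mem_univ, if_true]
  linear_combination (2 * labelSum Φ y.1) * hnorm

theorem walkOpGen_apply (τ : V × L → V × L) (Φ : EuclideanSpace ℂ (V × L)) (x : V × L) :
    walkOpGen τ Φ x = 2 / Fintype.card L * labelSum Φ (τ x).1 - Φ (τ x) :=
  coinOpGen_apply Φ (τ x)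

variable {τ : V × L → V × L} {Φ : EuclideanSpace ℂ (V × L)} {e : ℂ}

theorem walkOpGen_eq_smul_apply (hW : walkOpGen τ Φ = e • Φ) (x : V × L) :
    2 / Fintype.card L * labelSum Φ (τ x).1 - Φ (τ x) = e * Φ x := by
  rw [← walkOpGen_apply, hW]; rfl

theorem eq_zero_of_walkOpGen_eq_smul_of_labelSum_eq_zero (hτ : Function.Involutive τ)
    (hW : walkOpGen τ Φ = e • Φ) (he : e ^ 2 ≠ 1) (hs : labelSum Φ = 0) : Φ = 0 := by
  ext x
  have h₁ := walkOpGen_eq_smul_apply hW x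
  have h₂ := walkOpGen_eq_smul_apply hW (τ x)
  rw [hτ x, hs, Pi.zero_apply] at h₂
  rw [hs, Pi.zero_apply] at h₁
  have : (e ^ 2 - 1) * Φ x = 0 := by linear_combination h₂ - e * h₁
  simpa [sub_ne_zero.mpr he] using this

theorem one_add_sq_mul_labelSum_eq [Nonempty L] (hτ : Function.Involutive τ)
    (hW : walkOpGen τ Φ = e • Φ) (u : V) :
    (1 + e ^ 2) * labelSum Φ u =
      2 * e * ((Fintype.card L : ℂ)⁻¹ * ∑ g, labelSum Φ (τ (u, g)).1) := by
  have hD : (Fintype.card L : ℂ) ≠ 0 := by exact_mod_cast Fintype.card_ne_zero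
  have hpoint (g : L) : 2 / Fintype.card L * labelSum Φ u + (e ^ 2 - 1) * Φ (u, g) =
      2 * e / Fintype.card L * labelSum Φ (τ (u, g)).1 := by
    have h₁ := walkOpGen_eq_smul_apply hW (u, g)
    have h₂ := walkOpGen_eq_smul_apply hW (τ (u, g))
    rw [hτ] at h₂
    linear_combination h₂ - e * h₁
  have hsum := Finset.sum_congr rfl fun g (_ : g ∈ Finset.univ) => hpoint g
  rw [Finset.sum_add_distrib, Finset.sum_const, ← Finset.mul_sum, ← Finset.mul_sum] at hsum
  simp only [Finset.card_univ, nsmul_eq_mul] at hsum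
  rw [← labelSum] at hsum
  field_simp at hsum ⊢
  linear_combination hsum

end Walk

theorem Complex.exp_mul_I_sq_ne_one {φ : ℝ} (hφ0 : 0 < φ) (hφπ : φ < Real.pi) :
    Complex.exp (φ * Complex.I) ^ 2 ≠ 1 := by
  rw [← Complex.exp_nat_mul, Ne, Complex.exp_eq_one_iff]
  rintro ⟨n, hn⟩
  have hφ : 2 * φ = n * (2 * Real.pi) := by simpa using congrArg Complex.im hn
  have h0 : (0 : ℝ) < n := by nlinarith [Real.pi_pos]
  have h1 : (n : ℝ) < 1 := by nlinarith [Real.pi_pos]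
  have : (0 : ℤ) < n := by exact_mod_cast h0
  have : n < 1 := by exact_mod_cast h1
  omega

theorem Complex.one_add_exp_mul_I_sq (φ : ℝ) :
    1 + Complex.exp (φ * Complex.I) ^ 2 = 2 * Complex.exp (φ * Complex.I) * Real.cos φ := by
  rw [Complex.ofReal_cos, Complex.exp_mul_I]
  linear_combination -Complex.sin_sq_add_cos_sq (φ : ℂ) + Complex.sin φ ^ 2 * Complex.I_sq

theorem exists_realLinear_comp_ne_zero {ι : Type*} {s : ι → ℂ} (hs : s ≠ 0) :
    ∃ P : ℂ →ₗ[ℝ] ℝ, P ∘ s ≠ 0 := by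
  obtain ⟨i, hi⟩ := Function.ne_iff.mp hs
  by_contra! h
  exact hi (Complex.ext (congrFun (h Complex.reLm) i) (congrFun (h Complex.imLm) i))

open Matrix in
theorem adjMatrix_pow_mulVec_comp_eq_smul {V : Type*} [Fintype V] [DecidableEq V] {d : ℕ}
    (σ : V × Fin d → V × Fin d) {t : ℕ} {s : V → ℂ} {c : ℝ}
    (hs : ∀ u, ((d : ℂ) ^ t)⁻¹ * ∑ g : Fin t → Fin d, s (rotPow σ t (u, g)).1 = c * s u)
    (P : ℂ →ₗ[ℝ] ℝ) :
    adjMatrix σ ^ t *ᵥ (P ∘ s) = c • (P ∘ s) := by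
  funext u
  have h := congrArg P (hs u)
  rw [show ((d : ℂ) ^ t)⁻¹ = (((d : ℝ) ^ t)⁻¹ : ℝ) by push_cast; rfl,
    ← Complex.real_smul, ← Complex.real_smul, map_smul, map_smul, map_sum] at h
  simpa [adjMatrix_pow_mulVec_apply] using h

theorem powered_walk_eigenphase_is_power_of_adjacency_eigenvalue_general
    {V : Type*} [Fintype V] [DecidableEq V] {d : ℕ} (hd : 1 ≤ d)
    (σ : V × Fin d → V × Fin d) (hσ : ∀ x, σ (σ x) = x)
    (t : ℕ)
    (Φ : EuclideanSpace ℂ (V × (Fin t → Fin d))) (hΦ : ‖Φ‖ = 1)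
    (φ : ℝ) (hφ0 : 0 < φ) (hφπ : φ < Real.pi)
    (hW : walkOpGen (rotPow σ t) Φ = Complex.exp (φ * Complex.I) • Φ) :
    ∃ (μ : ℝ) (w : V → ℝ), w ≠ 0 ∧ (adjMatrix σ).mulVec w = μ • w ∧ Real.cos φ = μ ^ t := by
  have : NeZero d := ⟨by omega⟩
  have hτ := rotPow_involutive σ hσ t
  have hs : labelSum Φ ≠ 0 := fun hs => by
    simp [eq_zero_of_walkOpGen_eq_smul_of_labelSum_eq_zero hτ hW
      (Complex.exp_mul_I_sq_ne_one hφ0 hφπ) hs] at hΦ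
  have heig (u : V) : ((d : ℂ) ^ t)⁻¹ * ∑ g, labelSum Φ (rotPow σ t (u, g)).1 =
      Real.cos φ * labelSum Φ u := by
    have h := one_add_sq_mul_labelSum_eq hτ hW u
    rw [Complex.one_add_exp_mul_I_sq] at h
    simp only [Fintype.card_fun, Fintype.card_fin, Nat.cast_pow] at h
    have h2e : 2 * Complex.exp (φ * Complex.I) ≠ 0 :=
      mul_ne_zero two_ne_zero (Complex.exp_ne_zero _)
    exact (mul_left_cancel₀ h2e (by linear_combination h)).symm
  obtain ⟨P, hP⟩ := exists_realLinear_comp_ne_zero hs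
  exact (adjMatrix_isSymm σ hσ).exists_eigenvalue_pow_eq_of_pow_mulVec_eq_smul hP
    (adjMatrix_pow_mulVec_comp_eq_smul σ heig P)

/-- If the powered rotation map `σ_t` has no fixed points and `Φ` is a unit
vector with `W_t Φ = e^{iφ} Φ`, `0 < φ < π`, then `cos φ = μ^t` for some real eigenvalue `μ`
of the normalized adjacency matrix of `σ`. -/
theorem powered_walk_eigenphase_is_power_of_adjacency_eigenvalue
    {V : Type*} [Fintype V] [DecidableEq V] [Nonempty V] {d : ℕ} (hd : 1 ≤ d)
    (σ : V × Fin d → V × Fin d) (hσ : ∀ x, σ (σ x) = x)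
    (t : ℕ) (ht : 1 ≤ t)
    (hfix : ∀ x : V × (Fin t → Fin d), rotPow σ t x ≠ x)
    (Φ : EuclideanSpace ℂ (V × (Fin t → Fin d))) (hΦ : ‖Φ‖ = 1)
    (φ : ℝ) (hφ0 : 0 < φ) (hφπ : φ < Real.pi)
    (hW : walkOpGen (rotPow σ t) Φ = Complex.exp (φ * Complex.I) • Φ) :
    ∃ (μ : ℝ) (w : V → ℝ), w ≠ 0 ∧ (adjMatrix σ).mulVec w = μ • w ∧ Real.cos φ = μ ^ t :=
  powered_walk_eigenphase_is_power_of_adjacency_eigenvalue_general hd σ hσ t Φ hΦ φ hφ0 hφπ hW
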